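/- Let n ≡ 0 (mod 4). The polynomials Φ_n^1(x) and Φ_n^3(x) are irreducible over ℚ(i). -/

import Mathlib

/-!
Let `μ = ζ^c` with `c ∈ G_n^r(1)`. Its minimal polynomial `g` over `ℚ(i)` divides both the
cyclotomic polynomial `Φ_n` and `X^{n/4} - μ^{n/4}`, and `μ^{n/4} = i^r` lies in `ℚ(i)`. So every
root of `g` is a primitive `n`-th root `ζ^a` with `i^a = i^r`, i.e. `a ∈ G_n^r(1)`, and since `g`
is separable, `g ∣ Φ_n^r`. On the other hand `[ℚ(μ) : ℚ] = φ(n)` and `[ℚ(i) : ℚ] = 2` force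
`deg g ≥ φ(n)/2`; as `|G_n^1(1)| + |G_n^3(1)| = φ(n)`, both divisibilities are equalities.
-/

open Finset Polynomial

/-- `G_n^r(1) = {a : 1 ≤ a ≤ n-1, gcd(a,n)=1, a ≡ r (mod 4)}`. -/
def Grone (n r : ℕ) : Finset ℕ :=
  (Finset.range n).filter (fun a => 1 ≤ a ∧ Nat.gcd a n = 1 ∧ a % 4 = r)

/-- `Φ_n^r(x) = ∏_{a ∈ G_n^r(1)} (x − e^{2πia/n})`. -/
noncomputable def Phir (n r : ℕ) : Polynomial ℂ :=
  ∏ a ∈ Grone n r, (X - C (Complex.exp (2 * Real.pi * Complex.I * a / n)))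

/-- The field `ℚ(i)`, realized as an intermediate field of `ℂ/ℚ`. -/
noncomputable def QI : IntermediateField ℚ ℂ := IntermediateField.adjoin ℚ {Complex.I}

open Complex IntermediateField

section MinpolyRoots

variable {F L : Type*} [Field F] [Field L] [Algebra F L]

theorem pow_eq_of_isRoot_map_minpoly {μ z : L} {m : ℕ} {x : F}
    (hx : μ ^ m = algebraMap F L x) (hz : ((minpoly F μ).map (algebraMap F L)).IsRoot z) :
    z ^ m = algebraMap F L x := by
  have hdvd : minpoly F μ ∣ X ^ m - C x := minpoly.dvd F μ (by simp [hx])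
  simpa [sub_eq_zero] using hz.dvd (Polynomial.map_dvd (algebraMap F L) hdvd)

theorem isPrimitiveRoot_of_isRoot_map_minpoly [CharZero L] {μ z : L} {n : ℕ} (hn : 0 < n)
    (hμ : IsPrimitiveRoot μ n) (hz : ((minpoly F μ).map (algebraMap F L)).IsRoot z) :
    IsPrimitiveRoot z n := by
  have hdvd : minpoly F μ ∣ cyclotomic n F :=
    minpoly.dvd F μ (by rw [aeval_def, eval₂_eq_eval_map, map_cyclotomic]
                        exact hμ.isRoot_cyclotomic hn)
  refine (isRoot_cyclotomic_iff_charZero hn).1 ?_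
  simpa using hz.dvd (Polynomial.map_dvd (algebraMap F L) hdvd)

end MinpolyRoots

theorem I_mem_QI : I ∈ QI := mem_adjoin_simple_self ℚ I

theorem finrank_QI : Module.finrank ℚ QI = 2 := by
  rw [QI, adjoin.finrank (isPrimitiveRoot_I.isIntegral four_pos).tower_top,
    ← cyclotomic_eq_minpoly_rat isPrimitiveRoot_I four_pos, natDegree_cyclotomic]
  decide

theorem totient_le_two_mul_natDegree_minpoly {n : ℕ} {μ : ℂ} (hn : 0 < n)
    (hμ : IsPrimitiveRoot μ n) : n.totient ≤ 2 * (minpoly QI μ).natDegree := by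
  have hℚ : IsIntegral ℚ μ := (hμ.isIntegral hn).tower_top
  have hQI : IsIntegral QI μ := hℚ.tower_top
  have : FiniteDimensional ℚ QI := Module.finite_of_finrank_eq_succ finrank_QI
  have : FiniteDimensional QI QI⟮μ⟯ := adjoin.finiteDimensional hQI
  have hfin : FiniteDimensional ℚ QI⟮μ⟯ := Module.Finite.trans QI QI⟮μ⟯
  have : FiniteDimensional ℚ (QI⟮μ⟯.restrictScalars ℚ) := hfin
  calc n.totient = Module.finrank ℚ ℚ⟮μ⟯ := by
        rw [adjoin.finrank hℚ, ← cyclotomic_eq_minpoly_rat hμ hn, natDegree_cyclotomic]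
    _ ≤ Module.finrank ℚ (QI⟮μ⟯.restrictScalars ℚ) :=
        finrank_le_of_le_right (adjoin_simple_le_iff.2 (mem_adjoin_simple_self QI μ))
    _ = Module.finrank ℚ QI⟮μ⟯ := rfl
    _ = Module.finrank ℚ QI * Module.finrank QI QI⟮μ⟯ := (Module.finrank_mul_finrank ..).symm
    _ = 2 * (minpoly QI μ).natDegree := by rw [finrank_QI, adjoin.finrank hQI]

noncomputable def zeta (n : ℕ) : ℂ := exp (2 * Real.pi * I / n)

theorem isPrimitiveRoot_zeta {n : ℕ} (hn : 0 < n) : IsPrimitiveRoot (zeta n) n :=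
  isPrimitiveRoot_exp n hn.ne'

theorem exp_eq_zeta_pow (n a : ℕ) : exp (2 * Real.pi * I * a / n) = zeta n ^ a := by
  rw [zeta, ← exp_nat_mul]
  ring_nf

theorem zeta_pow_div_four {n : ℕ} (hn : 0 < n) (h4 : 4 ∣ n) : zeta n ^ (n / 4) = I := by
  rw [← exp_eq_zeta_pow, Nat.cast_div h4 (by norm_num)]
  convert exp_pi_div_two_mul_I using 2
  have : (n : ℂ) ≠ 0 := by exact_mod_cast hn.ne'
  push_cast
  field_simp
  ring

theorem card_grone_one_add_card_grone_three {n : ℕ} (h2 : 2 ∣ n) :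
    #(Grone n 1) + #(Grone n 3) = n.totient := by
  have hdisj : Disjoint (Grone n 1) (Grone n 3) := by
    simp only [disjoint_left, Grone, mem_filter]
    omega
  rw [← card_union_of_disjoint hdisj, Nat.totient]
  congr 1
  ext a
  simp only [Grone, mem_union, mem_filter, mem_range]
  constructor
  · rintro (⟨ha, -, hcop, -⟩ | ⟨ha, -, hcop, -⟩) <;> exact ⟨ha, Nat.coprime_comm.1 hcop⟩
  · rintro ⟨ha, hcop⟩
    have hodd : Odd a := Nat.coprime_two_right.1 (Nat.Coprime.coprime_dvd_right h2 hcop.symm)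
    have hpos : 1 ≤ a := hodd.pos
    rw [Nat.odd_iff] at hodd
    exact (by omega : a % 4 = 1 ∨ a % 4 = 3).imp
      (⟨ha, hpos, hcop.symm, ·⟩) (⟨ha, hpos, hcop.symm, ·⟩)

theorem exists_mem_grone_zeta_pow_eq {n r : ℕ} {z : ℂ} (hn : 0 < n) (h4 : 4 ∣ n) (hr : r < 4)
    (hz : IsPrimitiveRoot z n) (hzI : z ^ (n / 4) = I ^ r) : ∃ a ∈ Grone n r, zeta n ^ a = z := by
  have : NeZero n := ⟨hn.ne'⟩
  obtain ⟨a, han, hcop, rfl⟩ := (isPrimitiveRoot_zeta hn).isPrimitiveRoot_iff.1 hz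
  rw [← pow_mul, mul_comm, pow_mul, zeta_pow_div_four hn h4,
    (isPrimitiveRoot_I.isOfFinOrder four_ne_zero).pow_eq_pow_iff_modEq,
    ← isPrimitiveRoot_I.eq_orderOf] at hzI
  have ha : a ≠ 0 := by
    rintro rfl
    rw [Nat.coprime_zero_left] at hcop
    omega
  refine ⟨a, ?_, rfl⟩
  simp only [Grone, mem_filter, mem_range]
  exact ⟨han, Nat.one_le_iff_ne_zero.2 ha, hcop, by rw [hzI, Nat.mod_eq_of_lt hr]⟩

theorem monic_phir (n r : ℕ) : (Phir n r).Monic :=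
  monic_prod_of_monic _ _ fun _ _ => monic_X_sub_C _

theorem natDegree_phir (n r : ℕ) : (Phir n r).natDegree = #(Grone n r) := by
  rw [Phir, natDegree_prod_of_monic _ _ fun _ _ => monic_X_sub_C _]
  simp

theorem isRoot_phir {n r a : ℕ} (ha : a ∈ Grone n r) : (Phir n r).IsRoot (zeta n ^ a) := by
  simp only [Phir, IsRoot, eval_prod, eval_sub, eval_X, eval_C, exp_eq_zeta_pow]
  exact prod_eq_zero ha (sub_self _)

theorem isPrimitiveRoot_zeta_pow_of_mem_grone {n r c : ℕ} (hn : 0 < n) (hc : c ∈ Grone n r) :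
    IsPrimitiveRoot (zeta n ^ c) n :=
  (isPrimitiveRoot_zeta hn).pow_of_coprime c (mem_filter.1 hc).2.2.1

theorem map_minpoly_zeta_pow_dvd_phir {n r c : ℕ} (hn : 0 < n) (h4 : 4 ∣ n) (hc : c ∈ Grone n r) :
    (minpoly QI (zeta n ^ c)).map (algebraMap QI ℂ) ∣ Phir n r := by
  have hμ := isPrimitiveRoot_zeta_pow_of_mem_grone hn hc
  have hint : IsIntegral QI (zeta n ^ c) := (hμ.isIntegral hn).tower_top
  obtain rfl : c % 4 = r := (mem_filter.1 hc).2.2.2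
  set q := (minpoly QI (zeta n ^ c)).map (algebraMap QI ℂ)
  have hq0 : q ≠ 0 := ((minpoly.monic hint).map _).ne_zero
  have hnodup : q.roots.Nodup := nodup_roots (minpoly.irreducible hint).separable.map
  have hμI : (zeta n ^ c) ^ (n / 4) = algebraMap QI ℂ (⟨I, I_mem_QI⟩ ^ (c % 4)) := by
    rw [← pow_mul, mul_comm, pow_mul, zeta_pow_div_four hn h4, map_pow]
    conv_lhs => rw [← Nat.mod_add_div c 4, pow_add, pow_mul, I_pow_four, one_pow, mul_one]
    rfl
  refine (IsAlgClosed.splits q).dvd_of_roots_le_roots hq0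
    ((Multiset.le_iff_subset hnodup).2 fun z hz => ?_)
  rw [mem_roots hq0] at hz
  obtain ⟨a, ha, rfl⟩ := exists_mem_grone_zeta_pow_eq hn h4 (Nat.mod_lt c four_pos)
    (isPrimitiveRoot_of_isRoot_map_minpoly hn hμ hz) (pow_eq_of_isRoot_map_minpoly hμI hz)
  exact (mem_roots (monic_phir n _).ne_zero).2 (isRoot_phir ha)

theorem natDegree_minpoly_zeta_pow_le_card {n r c : ℕ} (hn : 0 < n) (h4 : 4 ∣ n)
    (hc : c ∈ Grone n r) : (minpoly QI (zeta n ^ c)).natDegree ≤ #(Grone n r) := by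
  rw [← natDegree_phir, ← natDegree_map (algebraMap QI ℂ)]
  exact natDegree_le_of_dvd (map_minpoly_zeta_pow_dvd_phir hn h4 hc) (monic_phir n r).ne_zero

theorem exists_irreducible_map_eq_phir {n r c : ℕ} (hn : 0 < n) (h4 : 4 ∣ n)
    (hc : c ∈ Grone n r) (hdeg : #(Grone n r) ≤ (minpoly QI (zeta n ^ c)).natDegree) :
    ∃ p : QI[X], p.map (algebraMap QI ℂ) = Phir n r ∧ Irreducible p := by
  have hint : IsIntegral QI (zeta n ^ c) :=
    ((isPrimitiveRoot_zeta_pow_of_mem_grone hn hc).isIntegral hn).tower_top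
  refine ⟨minpoly QI (zeta n ^ c), ?_, minpoly.irreducible hint⟩
  refine (eq_of_monic_of_dvd_of_natDegree_le ((minpoly.monic hint).map _) (monic_phir n r)
    (map_minpoly_zeta_pow_dvd_phir hn h4 hc) ?_).symm
  rwa [natDegree_phir, natDegree_map]

theorem stmt13 (n : ℕ) (hn : 0 < n) (h4 : n % 4 = 0) :
    (∃ p : Polynomial QI, p.map (algebraMap QI ℂ) = Phir n 1 ∧ Irreducible p) ∧
    (∃ p : Polynomial QI, p.map (algebraMap QI ℂ) = Phir n 3 ∧ Irreducible p) := by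
  have hdvd4 : 4 ∣ n := Nat.dvd_of_mod_eq_zero h4
  have h1 : 1 ∈ Grone n 1 := by
    simp only [Grone, mem_filter, mem_range]
    exact ⟨by omega, le_rfl, Nat.gcd_one_left n, by norm_num⟩
  have h3 : n - 1 ∈ Grone n 3 := by
    simp only [Grone, mem_filter, mem_range]
    exact ⟨by omega, by omega, (Nat.coprime_self_sub_left hn).2 (Nat.coprime_one_left n), by omega⟩
  have hcard := card_grone_one_add_card_grone_three (dvd_trans (by norm_num) hdvd4)
  have hle1 := natDegree_minpoly_zeta_pow_le_card hn hdvd4 h1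
  have hle3 := natDegree_minpoly_zeta_pow_le_card hn hdvd4 h3
  have hge1 :=
    totient_le_two_mul_natDegree_minpoly hn (isPrimitiveRoot_zeta_pow_of_mem_grone hn h1)
  have hge3 :=
    totient_le_two_mul_natDegree_minpoly hn (isPrimitiveRoot_zeta_pow_of_mem_grone hn h3)
  exact ⟨exists_irreducible_map_eq_phir hn hdvd4 h1 (by omega),
    exists_irreducible_map_eq_phir hn hdvd4 h3 (by omega)⟩
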